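/- arXiv:math/9905176 — 2 statements merged into one kernel-verified Lean document; each statement's English description precedes it below -/
import Mathlib

section
/- Let (M,ω) be symplectic, ∇ a torsion-free symplectic connection (∇ω = 0), and ξ a vector field with L_ξ ω = ω. Define S(X,Y) := (L_ξ∇)_X Y. Then for all vector fields X, Y, Z: ω(Z, S(X,Y)) = −ω(S(X,Z), Y). -/
/-!
Chart model of an affine connection: on a normed space `E` a connection is given
by its Christoffel symbols `Γ : E → E →L[ℝ] E →L[ℝ] E`; the covariant derivative
of a vector field `Y` along `X` is `∇_X Y = DY(X) + Γ(X, Y)`; torsion freeness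
means that `Γ x` is symmetric.
-/

variable {E : Type*} [NormedAddCommGroup E] [NormedSpace ℝ E]

/-- Covariant derivative `∇_X Y = DY(X) + Γ(X)(Y)`. -/
noncomputable def cov (Γ : E → E →L[ℝ] E →L[ℝ] E) (X Y : E → E) : E → E :=
  fun x => fderiv ℝ Y x (X x) + Γ x (X x) (Y x)

/-- Lie bracket of vector fields, `[X,Y] = DY(X) − DX(Y)`. -/
noncomputable def lieB (X Y : E → E) : E → E :=
  fun x => fderiv ℝ Y x (X x) - fderiv ℝ X x (Y x)

/-- Curvature `R(X,Y)Z = ∇_X ∇_Y Z − ∇_Y ∇_X Z − ∇_{[X,Y]} Z`. -/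
noncomputable def curvR (Γ : E → E →L[ℝ] E →L[ℝ] E) (X Y Z : E → E) : E → E :=
  cov Γ X (cov Γ Y Z) - cov Γ Y (cov Γ X Z) - cov Γ (lieB X Y) Z

/-- Second covariant derivative `∇²_{(X,Y)} ξ = ∇_X ∇_Y ξ − ∇_{∇_X Y} ξ`. -/
noncomputable def covTwo (Γ : E → E →L[ℝ] E →L[ℝ] E) (X Y ξ : E → E) : E → E :=
  cov Γ X (cov Γ Y ξ) - cov Γ (cov Γ X Y) ξ

/-- `(L_ξ ∇)_X Y = L_ξ(∇_X Y) − ∇_X (L_ξ Y) − ∇_{L_ξ X} Y`, with `L_ξ Y = [ξ,Y]`. -/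
noncomputable def lieNabla (Γ : E → E →L[ℝ] E →L[ℝ] E) (ξ X Y : E → E) : E → E :=
  lieB ξ (cov Γ X Y) - cov Γ X (lieB ξ Y) - cov Γ (lieB ξ X) Y


/-- Lie derivative of a covariant two-tensor field `ω` along `ξ` on constant
vectors: `(L_ξ ω)_x(v,w) = Dω_x(ξ x)(v,w) + ω_x(Dξ_x v, w) + ω_x(v, Dξ_x w)`. -/
noncomputable def lieDerivForm (ξ : E → E) (ω : E → E →L[ℝ] E →L[ℝ] ℝ)
    (x : E) (v w : E) : ℝ :=
  fderiv ℝ (fun y => ω y v w) x (ξ x)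
    + ω x (fderiv ℝ ξ x v) w + ω x v (fderiv ℝ ξ x w)

/-- Covariant derivative of a two-form:
`(∇_u ω)_x(v,w) = Dω_x(u)(v,w) − ω_x(Γ x u v, w) − ω_x(v, Γ x u w)`. -/
noncomputable def covForm (Γ : E → E →L[ℝ] E →L[ℝ] E) (ω : E → E →L[ℝ] E →L[ℝ] ℝ)
    (x : E) (u v w : E) : ℝ :=
  fderiv ℝ (fun y => ω y v w) x u - ω x (Γ x u v) w - ω x v (Γ x u w)


section AuxLemmas

variable {E : Type*} [NormedAddCommGroup E] [NormedSpace ℝ E]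

noncomputable abbrev instNACG1 : NormedAddCommGroup (E →L[ℝ] ℝ) := inferInstance
noncomputable abbrev instNS1 : NormedSpace ℝ (E →L[ℝ] ℝ) := inferInstance
noncomputable abbrev instNACG2 : NormedAddCommGroup (E →L[ℝ] E →L[ℝ] ℝ) := inferInstance
noncomputable abbrev instNS2 : NormedSpace ℝ (E →L[ℝ] E →L[ℝ] ℝ) := inferInstance

attribute [local instance] instNACG1 instNS1 instNACG2 instNS2

private lemma fderiv_app2' (ω : E → E →L[ℝ] E →L[ℝ] ℝ) {x : E} (hω : DifferentiableAt ℝ ω x)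
    (v w u : E) : fderiv ℝ (fun y => ω y v w) x u = fderiv ℝ ω x u v w := by
  have h := (hω.hasFDerivAt.clm_apply (hasFDerivAt_const v x)).clm_apply (hasFDerivAt_const w x)
  rw [h.fderiv]; simp

private lemma lieNabla_eq' (Γ : E → E →L[ℝ] E →L[ℝ] E) (ξ X Y : E → E)
    (hΓ : ContDiff ℝ 2 Γ) (hξ : ContDiff ℝ 2 ξ) (hX : ContDiff ℝ 2 X)
    (hY : ContDiff ℝ 2 Y) (x : E) :
    lieNabla Γ ξ X Y x =
      fderiv ℝ (fderiv ℝ ξ) x (X x) (Y x) + fderiv ℝ Γ x (ξ x) (X x) (Y x)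
      + Γ x (X x) (fderiv ℝ ξ x (Y x)) + Γ x (fderiv ℝ ξ x (X x)) (Y x)
      - fderiv ℝ ξ x (Γ x (X x) (Y x)) := by
  have one_le_two : (1:WithTop ℕ∞) + 1 ≤ 2 := by norm_num
  have dΓ : Differentiable ℝ Γ := hΓ.differentiable (by norm_num)
  have dξ : Differentiable ℝ ξ := hξ.differentiable (by norm_num)
  have dX : Differentiable ℝ X := hX.differentiable (by norm_num)
  have dY : Differentiable ℝ Y := hY.differentiable (by norm_num)
  have dY' : Differentiable ℝ (fderiv ℝ Y) := (hY.fderiv_right one_le_two).differentiable (by norm_num)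
  have dξ' : Differentiable ℝ (fderiv ℝ ξ) := (hξ.fderiv_right one_le_two).differentiable (by norm_num)
  have hcov := (((dY' x).hasFDerivAt.clm_apply (dX x).hasFDerivAt).add
    (((dΓ x).hasFDerivAt.clm_apply (dX x).hasFDerivAt).clm_apply (dY x).hasFDerivAt))
  have hcovf : fderiv ℝ (cov Γ X Y) x = _ := hcov.fderiv
  have hlb := ((dY' x).hasFDerivAt.clm_apply (dξ x).hasFDerivAt).sub
    ((dξ' x).hasFDerivAt.clm_apply (dY x).hasFDerivAt)
  have hlbf : fderiv ℝ (lieB ξ Y) x = _ := hlb.fderiv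
  have hsym : fderiv ℝ (fderiv ℝ Y) x (ξ x) (X x) = fderiv ℝ (fderiv ℝ Y) x (X x) (ξ x) :=
    (hY.contDiffAt.isSymmSndFDerivAt (by norm_num)) _ _
  show lieB ξ (cov Γ X Y) x - cov Γ X (lieB ξ Y) x - cov Γ (lieB ξ X) Y x = _
  rw [show lieB ξ (cov Γ X Y) x
      = fderiv ℝ (cov Γ X Y) x (ξ x) - fderiv ℝ ξ x (cov Γ X Y x) from rfl]
  rw [show cov Γ X (lieB ξ Y) x
      = fderiv ℝ (lieB ξ Y) x (X x) + Γ x (X x) (lieB ξ Y x) from rfl]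
  rw [hcovf, hlbf]
  show _ - _ - (fderiv ℝ Y x (lieB ξ X x) + Γ x (lieB ξ X x) (Y x)) = _
  rw [show lieB ξ X x = fderiv ℝ X x (ξ x) - fderiv ℝ ξ x (X x) from rfl,
    show cov Γ X Y x = fderiv ℝ Y x (X x) + Γ x (X x) (Y x) from rfl,
    show lieB ξ Y x = fderiv ℝ Y x (ξ x) - fderiv ℝ ξ x (Y x) from rfl]
  simp only [ContinuousLinearMap.add_apply, ContinuousLinearMap.sub_apply,
    ContinuousLinearMap.coe_comp',
    Function.comp_apply, ContinuousLinearMap.flip_apply, map_add, map_sub]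
  rw [hsym]
  abel

private lemma eq_one' (ω : E → E →L[ℝ] E →L[ℝ] ℝ) (ξ : E → E)
    (hω : ContDiff ℝ 2 ω) (hξ : ContDiff ℝ 2 ξ)
    (star : ∀ y v w, fderiv ℝ ω y (ξ y) v w + ω y (fderiv ℝ ξ y v) w
      + ω y v (fderiv ℝ ξ y w) = ω y v w) (x u v w : E) :
    fderiv ℝ (fderiv ℝ ω) x u (ξ x) v w + fderiv ℝ ω x (fderiv ℝ ξ x u) v w
      + fderiv ℝ ω x u (fderiv ℝ ξ x v) w + ω x (fderiv ℝ (fderiv ℝ ξ) x u v) w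
      + fderiv ℝ ω x u v (fderiv ℝ ξ x w) + ω x v (fderiv ℝ (fderiv ℝ ξ) x u w)
      = fderiv ℝ ω x u v w := by
  have one_le_two : (1:WithTop ℕ∞) + 1 ≤ 2 := by norm_num
  have dω : Differentiable ℝ ω := hω.differentiable (by norm_num)
  have dξ : Differentiable ℝ ξ := hξ.differentiable (by norm_num)
  have dΩ : Differentiable ℝ (fderiv ℝ ω) := (hω.fderiv_right one_le_two).differentiable (by norm_num)
  have dA : Differentiable ℝ (fderiv ℝ ξ) := (hξ.fderiv_right one_le_two).differentiable (by norm_num)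
  have t1 := (((dΩ x).hasFDerivAt.clm_apply (dξ x).hasFDerivAt).clm_apply
    (hasFDerivAt_const v x)).clm_apply (hasFDerivAt_const w x)
  have t2 := ((dω x).hasFDerivAt.clm_apply ((dA x).hasFDerivAt.clm_apply
    (hasFDerivAt_const v x))).clm_apply (hasFDerivAt_const w x)
  have t3 := ((dω x).hasFDerivAt.clm_apply (hasFDerivAt_const v x)).clm_apply
    ((dA x).hasFDerivAt.clm_apply (hasFDerivAt_const w x))
  have tr := ((dω x).hasFDerivAt.clm_apply (hasFDerivAt_const v x)).clm_apply
    (hasFDerivAt_const w x)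
  have hL := ((t1.add t2).add t3).congr_of_eventuallyEq
    (Filter.Eventually.of_forall fun y => (star y v w).symm)
  have h := hL.unique tr
  have h2 := congrArg (fun L : E →L[ℝ] ℝ => L u) h
  simp only [ContinuousLinearMap.add_apply, ContinuousLinearMap.coe_comp',
    Function.comp_apply, ContinuousLinearMap.flip_apply, ContinuousLinearMap.zero_apply,
    ContinuousLinearMap.zero_comp, ContinuousLinearMap.comp_zero, zero_add, add_zero,
    map_zero] at h2
  linarith [h2]

private lemma eq_two' (ω : E → E →L[ℝ] E →L[ℝ] ℝ) (Γ : E → E →L[ℝ] E →L[ℝ] E)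
    (hω : ContDiff ℝ 2 ω) (hΓ : ContDiff ℝ 2 Γ)
    (par : ∀ y u v w, fderiv ℝ ω y u v w = ω y (Γ y u v) w + ω y v (Γ y u w))
    (x s u v w : E) :
    fderiv ℝ (fderiv ℝ ω) x s u v w =
      fderiv ℝ ω x s (Γ x u v) w + ω x (fderiv ℝ Γ x s u v) w
      + fderiv ℝ ω x s v (Γ x u w) + ω x v (fderiv ℝ Γ x s u w) := by
  have one_le_two : (1:WithTop ℕ∞) + 1 ≤ 2 := by norm_num
  have dω : Differentiable ℝ ω := hω.differentiable (by norm_num)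
  have dΓ : Differentiable ℝ Γ := hΓ.differentiable (by norm_num)
  have dΩ : Differentiable ℝ (fderiv ℝ ω) := (hω.fderiv_right one_le_two).differentiable (by norm_num)
  have tl := (((dΩ x).hasFDerivAt.clm_apply (hasFDerivAt_const u x)).clm_apply
    (hasFDerivAt_const v x)).clm_apply (hasFDerivAt_const w x)
  have t1 := ((dω x).hasFDerivAt.clm_apply (((dΓ x).hasFDerivAt.clm_apply
    (hasFDerivAt_const u x)).clm_apply (hasFDerivAt_const v x))).clm_apply
    (hasFDerivAt_const w x)
  have t2 := ((dω x).hasFDerivAt.clm_apply (hasFDerivAt_const v x)).clm_apply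
    (((dΓ x).hasFDerivAt.clm_apply (hasFDerivAt_const u x)).clm_apply (hasFDerivAt_const w x))
  have hL := (t1.add t2).congr_of_eventuallyEq
    (Filter.Eventually.of_forall fun y => (par y u v w))
  have h := hL.unique tl
  have h2 := congrArg (fun L : E →L[ℝ] ℝ => L s) h
  simp only [ContinuousLinearMap.add_apply, ContinuousLinearMap.coe_comp',
    Function.comp_apply, ContinuousLinearMap.flip_apply, ContinuousLinearMap.zero_apply,
    ContinuousLinearMap.zero_comp, ContinuousLinearMap.comp_zero, zero_add, add_zero,
    map_zero] at h2
  linarith [h2]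

end AuxLemmas

/-- If `∇` is a torsion-free symplectic connection (`∇ω = 0`)
and `ξ` is conformally symplectic (`L_ξ ω = ω`), then the tensor
`S(X,Y) = (L_ξ ∇)_X Y` satisfies `ω(Z, S(X,Y)) = − ω(S(X,Z), Y)`. -/
theorem omega_lieNabla_antisym
    (Γ : E → E →L[ℝ] E →L[ℝ] E) (ω : E → E →L[ℝ] E →L[ℝ] ℝ) (ξ X Y Z : E → E)
    (hΓ : ContDiff ℝ (⊤ : ℕ∞) Γ) (hΓsym : ∀ x u v, Γ x u v = Γ x v u)
    (hω : ContDiff ℝ (⊤ : ℕ∞) ω)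
    (hωalt : ∀ x v w, ω x v w = - ω x w v)
    (hωnondeg : ∀ x v, (∀ w, ω x v w = 0) → v = 0)
    (hωpar : ∀ x u v w, covForm Γ ω x u v w = 0)
    (hconf : ∀ x v w, lieDerivForm ξ ω x v w = ω x v w)
    (hξ : ContDiff ℝ (⊤ : ℕ∞) ξ) (hX : ContDiff ℝ (⊤ : ℕ∞) X) (hY : ContDiff ℝ (⊤ : ℕ∞) Y)
    (hZ : ContDiff ℝ (⊤ : ℕ∞) Z) :
    ∀ x, ω x (Z x) (lieNabla Γ ξ X Y x) = - ω x (lieNabla Γ ξ X Z x) (Y x) := by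
  intro x
  letI : NormedAddCommGroup (E →L[ℝ] ℝ) := instNACG1
  letI : NormedSpace ℝ (E →L[ℝ] ℝ) := instNS1
  letI : NormedAddCommGroup (E →L[ℝ] E →L[ℝ] ℝ) := instNACG2
  letI : NormedSpace ℝ (E →L[ℝ] E →L[ℝ] ℝ) := instNS2
  have one_le_two : (1:WithTop ℕ∞) + 1 ≤ 2 := by norm_num
  have hω2 : ContDiff ℝ 2 ω := hω.of_le (by exact WithTop.coe_le_coe.mpr le_top)
  have hξ2 : ContDiff ℝ 2 ξ := hξ.of_le (by exact WithTop.coe_le_coe.mpr le_top)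
  have hΓ2 : ContDiff ℝ 2 Γ := hΓ.of_le (by exact WithTop.coe_le_coe.mpr le_top)
  have dω : Differentiable ℝ ω := hω2.differentiable (by norm_num)
  have star : ∀ y v w, fderiv ℝ ω y (ξ y) v w + ω y (fderiv ℝ ξ y v) w
      + ω y v (fderiv ℝ ξ y w) = ω y v w := by
    intro y v w
    have h := hconf y v w
    unfold lieDerivForm at h
    rwa [fderiv_app2' ω (dω y) v w (ξ y)] at h
  have par : ∀ y u v w, fderiv ℝ ω y u v w = ω y (Γ y u v) w + ω y v (Γ y u w) := by
    intro y u v w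
    have h := hωpar y u v w
    unfold covForm at h
    rw [fderiv_app2' ω (dω y) v w u] at h
    linarith
  set u := X x
  set v := Y x
  set w := Z x
  set a := ξ x
  have e1 := eq_one' ω ξ hω2 hξ2 star x u v w
  have e2 := eq_two' ω Γ hω2 hΓ2 par x a u v w
  have hsymm : fderiv ℝ (fderiv ℝ ω) x u a = fderiv ℝ (fderiv ℝ ω) x a u :=
    (hω2.contDiffAt.isSymmSndFDerivAt (by norm_num)) u a
  have symm : fderiv ℝ (fderiv ℝ ω) x u a v w = fderiv ℝ (fderiv ℝ ω) x a u v w := by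
    rw [hsymm]
  have s1 := star x (Γ x u v) w
  have s2 := star x v (Γ x u w)
  have p1 := par x u v w
  have p2 := par x (fderiv ℝ ξ x u) v w
  have p3 := par x u (fderiv ℝ ξ x v) w
  have p4 := par x u v (fderiv ℝ ξ x w)
  rw [lieNabla_eq' Γ ξ X Y hΓ2 hξ2 (hX.of_le (by exact WithTop.coe_le_coe.mpr le_top)) (hY.of_le (by exact WithTop.coe_le_coe.mpr le_top)) x,
    lieNabla_eq' Γ ξ X Z hΓ2 hξ2 (hX.of_le (by exact WithTop.coe_le_coe.mpr le_top)) (hZ.of_le (by exact WithTop.coe_le_coe.mpr le_top)) x]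
  simp only [map_add, map_sub, ContinuousLinearMap.add_apply, ContinuousLinearMap.sub_apply]
  linarith [e1, e2, symm, s1, s2, p1, p2, p3, p4,
    hωalt x w (fderiv ℝ (fderiv ℝ ξ) x u v),
    hωalt x w (fderiv ℝ Γ x a u v),
    hωalt x w (Γ x u (fderiv ℝ ξ x v)),
    hωalt x w (Γ x (fderiv ℝ ξ x u) v),
    hωalt x w (fderiv ℝ ξ x (Γ x u v)),
    hωalt x (fderiv ℝ (fderiv ℝ ξ) x u w) v,
    hωalt x (fderiv ℝ Γ x a u w) v,
    hωalt x (Γ x u (fderiv ℝ ξ x w)) v,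
    hωalt x (Γ x (fderiv ℝ ξ x u) w) v,
    hωalt x (fderiv ℝ ξ x (Γ x u w)) v]
end

section
/- Let A be an associative ℂ[[ν]]-algebra deformation (e.g. a star product algebra) such that every automorphism has the form exp(νD) for a derivation D, and let C be a ν-antilinear involutive map with C² = id that is an anti-automorphism of both ⋆₁ and ⋆₂. If T is an equivalence transformation from ⋆₁ to ⋆₂ (T(f⋆₁g) = Tf ⋆₂ Tg), and C T C = T exp(νD) for some derivation D of ⋆₁ with C D C = D, then S := T exp((ν/2)D) is an equivalence transformation from ⋆₁ to ⋆₂ satisfying C S C = S. -/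
/-!
Formal series model of star product algebras: `A = V[[ν]]` is represented by
`FS V = ℕ → V` (the `ν`-coefficients), for `V` a complex vector space (e.g.
`V = C^∞(M, ℂ)`).  A `ν`-linear derivation `D = Σ νⁱ Dᵢ` is given by a family
`Di : ℕ → V → V`; `exp(t ν D)` is then well defined coefficientwise.  The map
`C` is complex conjugation combined with `ν ↦ −ν`, modelled via a conjugation
`c0` on `V` and the sign `(−1)^k` on the `k`-th coefficient.
-/

/-- Formal power series in `ν` with coefficients in `V`. -/
abbrev FS (V : Type*) := ℕ → V

variable {V : Type*} [AddCommGroup V] [Module ℂ V]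

/-- The operator `D = Σᵢ νⁱ Dᵢ` on formal series. -/
def Dop (Di : ℕ → V → V) (a : FS V) : FS V := fun k =>
  ∑ i ∈ Finset.range (k + 1), Di i (a (k - i))

/-- The operator `ν D`. -/
def Nop (Di : ℕ → V → V) (a : FS V) : FS V := fun k =>
  if k = 0 then 0 else Dop Di a (k - 1)

/-- `exp(t ν D) = Σⱼ (tʲ/j!) (νD)ʲ`, a well-defined operator on formal series
since `(νD)ʲ` raises the `ν`-degree by at least `j`. -/
noncomputable def Ex (Di : ℕ → V → V) (t : ℂ) (a : FS V) : FS V := fun k =>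
  ∑ j ∈ Finset.range (k + 1),
    (t ^ j * ((j.factorial : ℂ))⁻¹) • (Nop Di)^[j] a k

/-- The conjugation `C` on formal series: conjugation `c0` of the coefficients
combined with `ν ↦ −ν`. -/
def Cop (c0 : V → V) (a : FS V) : FS V := fun k => ((-1 : ℤ) ^ k) • c0 (a k)

/-!
`νD` raises the `ν`-order and is a derivation of `⋆₁`, so only finitely many terms of
`exp(tνD)` reach a given power of `ν`; the Leibniz rule then makes `exp(tνD)` an automorphism of
`⋆₁`, and the binomial theorem gives `exp(tνD) exp(sνD) = exp((t + s)νD)`. Since `C` flips the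
sign of `ν` and commutes with `D`, it anticommutes with `νD`, so `C exp(tνD) C = exp(-t̄νD)`.
Hence `C S C = (C T C)(C exp(νD/2) C) = T exp(νD) exp(-νD/2) = S`.
-/

open Finset Nat

section Combinatorics

theorem sum_range_sum_range_eq_sum_antidiagonal {M : Type*} [AddCommMonoid M] (k : ℕ)
    (g : ℕ → ℕ → M) (hg : ∀ i l, k < i + l → g i l = 0) :
    ∑ i ∈ range (k + 1), ∑ l ∈ range (k + 1), g i l
      = ∑ m ∈ range (k + 1), ∑ p ∈ antidiagonal m, g p.1 p.2 := by
  have hfiber : ∀ m ∈ range (k + 1),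
      antidiagonal m = {p ∈ range (k + 1) ×ˢ range (k + 1) | p.1 + p.2 = m} := by
    intro m hm
    ext p
    simp only [mem_range, HasAntidiagonal.mem_antidiagonal, mem_filter, mem_product] at hm ⊢
    omega
  rw [sum_congr rfl fun m hm => congrArg (∑ p ∈ ·, g p.1 p.2) (hfiber m hm),
    sum_fiberwise_eq_sum_filter, sum_filter_of_ne, sum_product]
  intro p _ hp
  by_contra hk
  exact hp (hg p.1 p.2 (by simpa using hk))

theorem cast_add_choose_mul_inv_factorial (i l : ℕ) :
    ((i + l).choose i : ℂ) * ((i + l)! : ℂ)⁻¹ = (i ! : ℂ)⁻¹ * (l ! : ℂ)⁻¹ := by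
  have : ((i + l)! : ℂ) ≠ 0 := mod_cast (i + l).factorial_ne_zero
  rw [Nat.cast_add_choose]
  field_simp

theorem add_pow_mul_inv_factorial (t s : ℂ) (m : ℕ) :
    (t + s) ^ m * (m ! : ℂ)⁻¹
      = ∑ p ∈ antidiagonal m, (t ^ p.1 * (p.1 ! : ℂ)⁻¹) * (s ^ p.2 * (p.2 ! : ℂ)⁻¹) := by
  have := congrArg (PowerSeries.coeff m) (PowerSeries.exp_mul_exp_eq_exp_add t s)
  simpa [PowerSeries.coeff_mul, PowerSeries.coeff_rescale, PowerSeries.coeff_exp] using this.symm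

theorem iterate_apply_bilinear {R M : Type*} [CommSemiring R] [AddCommMonoid M] [Module R M]
    (N : M →ₗ[R] M) (μ : M →ₗ[R] M →ₗ[R] M) (hN : ∀ a b, N (μ a b) = μ (N a) b + μ a (N b))
    (n : ℕ) (a b : M) :
    N^[n] (μ a b) = ∑ ij ∈ antidiagonal n, n.choose ij.1 • μ (N^[ij.1] a) (N^[ij.2] b) := by
  induction n with
  | zero => simp
  | succ n ih =>
    rw [sum_antidiagonal_choose_succ_nsmul (fun i j => μ (N^[i] a) (N^[j] b)) n]
    simp only [Function.iterate_succ_apply', ih, map_sum, map_nsmul, hN, smul_add,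
      sum_add_distrib, add_comm]
    congr 1
    refine sum_congr rfl fun ⟨i, j⟩ hij => ?_
    rw [n.choose_symm_of_eq_add (mem_antidiagonal.1 hij).symm]

end Combinatorics

section Order

variable {M : Type*} [Zero M]

/-- `x` is divisible by `ν ^ p`. -/
def VanishesBelow (p : ℕ) (x : FS M) : Prop := ∀ j < p, x j = 0

def mulNu (a : FS M) : FS M := fun j => if j = 0 then 0 else a (j - 1)

def RaisesOrder (N : FS M → FS M) : Prop :=
  ∀ p x, VanishesBelow p x → VanishesBelow (p + 1) (N x)

def IsFiltered (μ : FS M → FS M → FS M) : Prop :=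
  ∀ p q x y, VanishesBelow p x → VanishesBelow q y → VanishesBelow (p + q) (μ x y)

theorem VanishesBelow.zero (x : FS M) : VanishesBelow 0 x :=
  fun _ h => (Nat.not_lt_zero _ h).elim

theorem VanishesBelow.succ_mulNu {p : ℕ} {x : FS M} (hx : VanishesBelow p x) :
    VanishesBelow (p + 1) (mulNu x) := by
  intro j hj
  unfold mulNu
  split_ifs with h
  · rfl
  · exact hx _ (by omega)

theorem VanishesBelow.eq_mulNu {p : ℕ} {x : FS M} (hx : VanishesBelow (p + 1) x) :
    VanishesBelow p (fun j => x (j + 1)) ∧ x = mulNu (fun j => x (j + 1)) := by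
  refine ⟨fun j hj => hx _ (by omega), funext fun j => ?_⟩
  cases j with
  | zero => exact hx 0 (by omega)
  | succ j => rfl

theorem RaisesOrder.iterate {N : FS M → FS M} (hN : RaisesOrder N) (n : ℕ) {p : ℕ}
    {x : FS M} (hx : VanishesBelow p x) : VanishesBelow (p + n) (N^[n] x) := by
  induction n with
  | zero => exact hx
  | succ n ih => rw [Function.iterate_succ_apply']; exact hN _ _ ih

theorem RaisesOrder.iterate_apply_eq_zero {N : FS M → FS M} (hN : RaisesOrder N)
    {n k : ℕ} (hk : k < n) (x : FS M) : N^[n] x k = 0 :=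
  hN.iterate n (VanishesBelow.zero x) k (by omega)

theorem isFiltered_of_mulNu {μ : FS M → FS M → FS M}
    (hl : ∀ x y, μ (mulNu x) y = mulNu (μ x y)) (hr : ∀ x y, μ x (mulNu y) = mulNu (μ x y)) :
    IsFiltered μ := by
  intro p
  induction p with
  | zero =>
    intro q
    induction q with
    | zero => exact fun x y _ _ => VanishesBelow.zero _
    | succ q ih =>
      intro x y hx hy
      obtain ⟨hy', hy_eq⟩ := hy.eq_mulNu
      rw [hy_eq, hr]
      exact (ih x _ hx hy').succ_mulNu
  | succ p ih =>
    intro q x y hx hy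
    obtain ⟨hx', hx_eq⟩ := hx.eq_mulNu
    rw [hx_eq, hl, Nat.add_right_comm]
    exact (ih q _ y hx' hy).succ_mulNu

end Order

section AddMonoid

variable {M : Type*} [AddMonoid M]

theorem mulNu_add (x y : FS M) : mulNu (x + y) = mulNu x + mulNu y := by
  funext j
  by_cases h : j = 0 <;> simp [mulNu, h]

theorem mulNu_comp_derivation {μ : FS M → FS M → FS M} {D : FS M → FS M}
    (hl : ∀ x y, μ (mulNu x) y = mulNu (μ x y)) (hr : ∀ x y, μ x (mulNu y) = mulNu (μ x y))
    (hD : ∀ a b, D (μ a b) = μ (D a) b + μ a (D b)) (a b : FS M) :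
    mulNu (D (μ a b)) = μ (mulNu (D a)) b + μ a (mulNu (D b)) := by
  rw [hD, mulNu_add, hl, hr]

end AddMonoid

section Exponential

/-- `exp (t N)`, meaningful when `N` raises the `ν`-order: then only the terms `j ≤ k`
contribute to the `k`-th coefficient. -/
noncomputable def expOp (N : FS V → FS V) (t : ℂ) (a : FS V) : FS V := fun k =>
  ∑ j ∈ range (k + 1), (t ^ j * (j ! : ℂ)⁻¹) • N^[j] a k

noncomputable def expTrunc (N : FS V → FS V) (t : ℂ) (K : ℕ) (a : FS V) : FS V :=
  ∑ j ∈ range (K + 1), (t ^ j * (j ! : ℂ)⁻¹) • N^[j] a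

theorem expOp_apply_eq_expTrunc_apply {N : FS V → FS V} (hN : RaisesOrder N) (t : ℂ) (a : FS V)
    {k K : ℕ} (hk : k ≤ K) : expOp N t a k = expTrunc N t K a k := by
  simp only [expOp, expTrunc, Finset.sum_apply, Pi.smul_apply]
  refine sum_subset (range_subset_range.mpr (by omega)) fun j _ hj => ?_
  rw [hN.iterate_apply_eq_zero (by simpa using hj), smul_zero]

theorem vanishesBelow_expOp_sub_expTrunc {N : FS V → FS V} (hN : RaisesOrder N) (t : ℂ)
    (a : FS V) (K : ℕ) : VanishesBelow (K + 1) (expOp N t a - expTrunc N t K a) :=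
  fun _ hk => sub_eq_zero.mpr (expOp_apply_eq_expTrunc_apply hN t a (by omega))

theorem RaisesOrder.iterate_apply_eq {N : FS V →ₗ[ℂ] FS V} (hN : RaisesOrder N) (n : ℕ) {k : ℕ}
    {x y : FS V} (h : VanishesBelow (k + 1) (x - y)) : N^[n] x k = N^[n] y k := by
  have := hN.iterate n h k (by omega)
  rw [← Module.End.coe_pow, map_sub, Pi.sub_apply, sub_eq_zero] at this
  simpa only [Module.End.coe_pow] using this

theorem IsFiltered.apply_eq {μ : FS V →ₗ[ℂ] FS V →ₗ[ℂ] FS V} (hμ : IsFiltered fun x y => μ x y)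
    {k : ℕ} {x x' y y' : FS V} (hx : VanishesBelow (k + 1) (x - x'))
    (hy : VanishesBelow (k + 1) (y - y')) : μ x y k = μ x' y' k := by
  have h1 := hμ _ 0 _ y hx (VanishesBelow.zero y) k (by omega)
  have h2 := hμ 0 _ x' _ (VanishesBelow.zero x') hy k (by omega)
  simp only [map_sub, LinearMap.sub_apply, Pi.sub_apply, sub_eq_zero] at h1 h2
  exact h1.trans h2

theorem iterate_expTrunc (N : FS V →ₗ[ℂ] FS V) (n : ℕ) (t : ℂ) (K : ℕ) (a : FS V) :
    N^[n] (expTrunc N t K a) = ∑ i ∈ range (K + 1), (t ^ i * (i ! : ℂ)⁻¹) • N^[n + i] a := by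
  simp only [expTrunc, ← Module.End.coe_pow, map_sum, map_smul, pow_add, Module.End.mul_apply]

theorem expOp_expOp {N : FS V →ₗ[ℂ] FS V} (hN : RaisesOrder N) (t s : ℂ) (a : FS V) :
    expOp N t (expOp N s a) = expOp N (t + s) a := by
  funext k
  have hinner : ∀ j, N^[j] (expOp N s a) k
      = ∑ i ∈ range (k + 1), (s ^ i * (i ! : ℂ)⁻¹) • N^[j + i] a k := fun j => by
    rw [hN.iterate_apply_eq j (vanishesBelow_expOp_sub_expTrunc hN s a k), iterate_expTrunc,
      Finset.sum_apply]
    rfl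
  calc expOp N t (expOp N s a) k
      = ∑ j ∈ range (k + 1), ∑ i ∈ range (k + 1),
          ((t ^ j * (j ! : ℂ)⁻¹) * (s ^ i * (i ! : ℂ)⁻¹)) • N^[j + i] a k := by
        simp only [expOp, hinner, smul_sum, smul_smul]
    _ = ∑ m ∈ range (k + 1), ∑ p ∈ antidiagonal m,
          ((t ^ p.1 * (p.1 ! : ℂ)⁻¹) * (s ^ p.2 * (p.2 ! : ℂ)⁻¹)) • N^[m] a k := by
        rw [sum_range_sum_range_eq_sum_antidiagonal k _
          fun j i h => by rw [hN.iterate_apply_eq_zero h, smul_zero]]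
        refine sum_congr rfl fun m _ => sum_congr rfl fun p hp => ?_
        rw [mem_antidiagonal.1 hp]
    _ = expOp N (t + s) a k := by
        simp only [expOp, add_pow_mul_inv_factorial, sum_smul]

theorem expOp_bilinear {N : FS V →ₗ[ℂ] FS V} (hN : RaisesOrder N)
    {μ : FS V →ₗ[ℂ] FS V →ₗ[ℂ] FS V} (hμ : IsFiltered fun x y => μ x y)
    (hder : ∀ a b, N (μ a b) = μ (N a) b + μ a (N b)) (t : ℂ) (a b : FS V) :
    expOp N t (μ a b) = μ (expOp N t a) (expOp N t b) := by
  funext k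
  have hvanish : ∀ i l, k < i + l → μ (N^[i] a) (N^[l] b) k = 0 := fun i l h =>
    hμ _ _ _ _ (hN.iterate i (VanishesBelow.zero a)) (hN.iterate l (VanishesBelow.zero b)) k
      (by omega)
  calc expOp N t (μ a b) k
      = ∑ m ∈ range (k + 1), ∑ p ∈ antidiagonal m,
          ((t ^ p.1 * (p.1 ! : ℂ)⁻¹) * (t ^ p.2 * (p.2 ! : ℂ)⁻¹)) •
            μ (N^[p.1] a) (N^[p.2] b) k := by
        simp only [expOp, iterate_apply_bilinear N μ hder, Finset.sum_apply, Pi.smul_apply,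
          smul_sum]
        refine sum_congr rfl fun m _ => sum_congr rfl fun p hp => ?_
        rw [← mem_antidiagonal.1 hp, ← Nat.cast_smul_eq_nsmul ℂ, smul_smul, pow_add]
        congr 1
        linear_combination (t ^ p.1 * t ^ p.2) * cast_add_choose_mul_inv_factorial p.1 p.2
    _ = ∑ i ∈ range (k + 1), ∑ l ∈ range (k + 1),
          ((t ^ i * (i ! : ℂ)⁻¹) * (t ^ l * (l ! : ℂ)⁻¹)) • μ (N^[i] a) (N^[l] b) k := by
        rw [sum_range_sum_range_eq_sum_antidiagonal k _
          fun i l h => by rw [hvanish i l h, smul_zero]]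
    _ = μ (expTrunc N t k a) (expTrunc N t k b) k := by
        simp only [expTrunc, map_sum, map_smul, LinearMap.sum_apply, LinearMap.smul_apply,
          Finset.sum_apply, Pi.smul_apply, smul_sum, smul_smul]
        rw [sum_comm]
        exact sum_congr rfl fun i _ => sum_congr rfl fun l _ => by rw [mul_comm]
    _ = μ (expOp N t a) (expOp N t b) k :=
        (hμ.apply_eq (vanishesBelow_expOp_sub_expTrunc hN t a k)
          (vanishesBelow_expOp_sub_expTrunc hN t b k)).symm

end Exponential

section Nop

variable {M : Type*} [AddCommGroup M] {Di : ℕ → M → M}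

theorem nop_eq_mulNu_dop (a : FS M) : Nop Di a = mulNu (Dop Di a) := rfl

theorem isLinearMap_nop [Module ℂ M] (hDi : ∀ i, IsLinearMap ℂ (Di i)) :
    IsLinearMap ℂ (Nop Di) := by
  constructor
  · intro x y
    funext k
    by_cases hk : k = 0 <;> simp [Nop, Dop, hk, (hDi _).map_add, sum_add_distrib]
  · intro z x
    funext k
    by_cases hk : k = 0 <;> simp [Nop, Dop, hk, (hDi _).map_smul, smul_sum]

theorem raisesOrder_nop (hDi : ∀ i, Di i 0 = 0) : RaisesOrder (Nop Di) := by
  intro p x hx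
  refine VanishesBelow.succ_mulNu fun j hj => sum_eq_zero fun i _ => ?_
  rw [hx _ (by omega), hDi]

end Nop

section Conjugation

variable (c : V →ₗ⋆[ℂ] V)

theorem Cop_Cop (hc : ∀ v, c (c v) = v) (a : FS V) : Cop c (Cop c a) = a := by
  funext k
  simp only [Cop, map_zsmul, hc, smul_smul, ← mul_pow]
  norm_num

theorem Cop_mulNu (x : FS V) : Cop c (mulNu x) = -mulNu (Cop c x) := by
  funext k
  cases k with
  | zero => simp [Cop, mulNu]
  | succ k => simp [Cop, mulNu, pow_succ]

theorem Cop_nop {Di : ℕ → V → V} (hDC : ∀ a, Cop c (Dop Di a) = Dop Di (Cop c a)) (a : FS V) :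
    Cop c (Nop Di a) = -Nop Di (Cop c a) := by
  rw [nop_eq_mulNu_dop, Cop_mulNu, hDC, nop_eq_mulNu_dop]

variable {c} {N : FS V →ₗ[ℂ] FS V}

theorem Cop_iterate (hNC : ∀ a, Cop c (N a) = -N (Cop c a)) (n : ℕ) (a : FS V) :
    Cop c (N^[n] a) = (-1 : ℂ) ^ n • N^[n] (Cop c a) := by
  induction n with
  | zero => simp
  | succ n ih =>
    rw [Function.iterate_succ_apply', Function.iterate_succ_apply', hNC, ih, map_smul, pow_succ,
      mul_smul, neg_one_smul, smul_neg]

theorem Cop_expOp (hNC : ∀ a, Cop c (N a) = -N (Cop c a)) (t : ℂ) (a : FS V) :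
    Cop c (expOp N t a) = expOp N (-starRingEnd ℂ t) (Cop c a) := by
  funext k
  have hterm : ∀ j, ((-1 : ℤ) ^ k) • c (N^[j] a k) = ((-1 : ℂ) ^ j) • N^[j] (Cop c a) k :=
    fun j => congrFun (Cop_iterate hNC j a) k
  simp only [Cop, expOp, map_sum, map_smulₛₗ, smul_comm ((-1 : ℤ) ^ k), smul_sum, hterm,
    smul_smul]
  refine sum_congr rfl fun j _ => ?_
  rw [map_mul, map_pow, map_inv₀, map_natCast, neg_pow]
  ring_nf

end Conjugation

theorem equivalence_compatible_with_conjugation_general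
    (m1 m2 : FS V → FS V → FS V) (T : FS V → FS V)
    (c0 : V → V) (Di : ℕ → V → V)
    (hc0invol : ∀ v, c0 (c0 v) = v)
    (hc0add : ∀ u v, c0 (u + v) = c0 u + c0 v)
    (hc0conj : ∀ (z : ℂ) (v : V), c0 (z • v) = (starRingEnd ℂ z) • c0 v)
    (hDlin : ∀ i, IsLinearMap ℂ (Di i))
    (hm1lin : ∀ b, IsLinearMap ℂ (fun a => m1 a b) ∧ IsLinearMap ℂ (fun a => m1 b a))
    (hm1shift : ∀ (a b : FS V) (k : ℕ),
      m1 (fun j => if j = 0 then 0 else a (j - 1)) b k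
          = (if k = 0 then 0 else m1 a b (k - 1)) ∧
      m1 a (fun j => if j = 0 then 0 else b (j - 1)) k
          = (if k = 0 then 0 else m1 a b (k - 1)))
    (hT : ∀ a b, T (m1 a b) = m2 (T a) (T b))
    (hDder : ∀ a b, Dop Di (m1 a b) = m1 (Dop Di a) b + m1 a (Dop Di b))
    (hCDC : ∀ a, Cop c0 (Dop Di (Cop c0 a)) = Dop Di a)
    (hCTC : ∀ a, Cop c0 (T (Cop c0 a)) = T (Ex Di 1 a)) :
    (∀ a b, T (Ex Di (1 / 2) (m1 a b))
        = m2 (T (Ex Di (1 / 2) a)) (T (Ex Di (1 / 2) b)))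
    ∧ (∀ a, Cop c0 (T (Ex Di (1 / 2) (Cop c0 a))) = T (Ex Di (1 / 2) a)) := by
  let c : V →ₗ⋆[ℂ] V := { toFun := c0, map_add' := hc0add, map_smul' := hc0conj }
  let N : FS V →ₗ[ℂ] FS V := (isLinearMap_nop hDlin).mk'
  let μ : FS V →ₗ[ℂ] FS V →ₗ[ℂ] FS V := LinearMap.mk₂ ℂ m1
    (fun x x' y => (hm1lin y).1.map_add x x') (fun z x y => (hm1lin y).1.map_smul z x)
    (fun x y y' => (hm1lin x).2.map_add y y') (fun z x y => (hm1lin x).2.map_smul z y)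
  have hμl : ∀ x y, m1 (mulNu x) y = mulNu (m1 x y) := fun x y =>
    funext fun k => (hm1shift x y k).1
  have hμr : ∀ x y, m1 x (mulNu y) = mulNu (m1 x y) := fun x y =>
    funext fun k => (hm1shift x y k).2
  have hN : RaisesOrder N := raisesOrder_nop fun i => (hDlin i).map_zero
  have hDC : ∀ a, Cop c (Dop Di a) = Dop Di (Cop c a) := fun a => by
    conv_lhs => rw [← Cop_Cop c hc0invol a]
    exact hCDC (Cop c a)
  have hCEx : ∀ t a, Cop c0 (Ex Di t a) = Ex Di (-starRingEnd ℂ t) (Cop c0 a) :=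
    Cop_expOp (N := N) (Cop_nop c hDC)
  have hExEx : ∀ t s a, Ex Di t (Ex Di s a) = Ex Di (t + s) a := expOp_expOp hN
  refine ⟨fun a b => ?_, fun a => ?_⟩
  · rw [← hT]
    exact congrArg T (expOp_bilinear hN (μ := μ) (isFiltered_of_mulNu hμl hμr)
      (mulNu_comp_derivation hμl hμr hDder) (1 / 2) a b)
  · calc Cop c0 (T (Ex Di (1 / 2) (Cop c0 a)))
        = Cop c0 (T (Cop c0 (Ex Di (-(1 / 2)) a))) := by
          rw [hCEx, map_neg, neg_neg, map_div₀, map_one, map_ofNat]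
      _ = T (Ex Di 1 (Ex Di (-(1 / 2)) a)) := hCTC _
      _ = T (Ex Di (1 / 2) a) := by rw [hExEx]; norm_num

/-- Let `⋆₁`, `⋆₂` be star products with `*`-structure `C`
(`C` an involutive anti-automorphism of both), let `T` be an equivalence
transformation from `⋆₁` to `⋆₂`, and suppose `C T C = T exp(νD)` for a
derivation `D` of `⋆₁` with `C D C = D`.  Then `S = T exp((ν/2) D)` is an
equivalence transformation from `⋆₁` to `⋆₂` satisfying `C S C = S`. -/
theorem equivalence_compatible_with_conjugation
    (m1 m2 : FS V → FS V → FS V) (T : FS V → FS V)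
    (c0 : V → V) (Di : ℕ → V → V)
    (hc0invol : ∀ v, c0 (c0 v) = v)
    (hc0add : ∀ u v, c0 (u + v) = c0 u + c0 v)
    (hc0conj : ∀ (z : ℂ) (v : V), c0 (z • v) = (starRingEnd ℂ z) • c0 v)
    (hDlin : ∀ i, IsLinearMap ℂ (Di i))
    (hm1lin : ∀ b, IsLinearMap ℂ (fun a => m1 a b) ∧ IsLinearMap ℂ (fun a => m1 b a))
    (hm1fil : ∀ (a b a' b' : FS V) (k : ℕ),
      (∀ j ≤ k, a j = a' j ∧ b j = b' j) → m1 a b k = m1 a' b' k)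
    (hm1shift : ∀ (a b : FS V) (k : ℕ),
      m1 (fun j => if j = 0 then 0 else a (j - 1)) b k
          = (if k = 0 then 0 else m1 a b (k - 1)) ∧
      m1 a (fun j => if j = 0 then 0 else b (j - 1)) k
          = (if k = 0 then 0 else m1 a b (k - 1)))
    (hC1 : ∀ a b, Cop c0 (m1 a b) = m1 (Cop c0 b) (Cop c0 a))
    (hC2 : ∀ a b, Cop c0 (m2 a b) = m2 (Cop c0 b) (Cop c0 a))
    (hT : ∀ a b, T (m1 a b) = m2 (T a) (T b))
    (hDder : ∀ a b, Dop Di (m1 a b) = m1 (Dop Di a) b + m1 a (Dop Di b))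
    (hCDC : ∀ a, Cop c0 (Dop Di (Cop c0 a)) = Dop Di a)
    (hCTC : ∀ a, Cop c0 (T (Cop c0 a)) = T (Ex Di 1 a)) :
    (∀ a b, T (Ex Di (1 / 2) (m1 a b))
        = m2 (T (Ex Di (1 / 2) a)) (T (Ex Di (1 / 2) b)))
    ∧ (∀ a, Cop c0 (T (Ex Di (1 / 2) (Cop c0 a))) = T (Ex Di (1 / 2) a)) :=
  equivalence_compatible_with_conjugation_general m1 m2 T c0 Di hc0invol hc0add hc0conj hDlin hm1lin
    hm1shift hT hDder hCDC hCTC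
end
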